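/- Let m ≥ 2 and let C be a self-dual Z_{2^m}-code of length n with a generator matrix G in standard form of type (k_1,…,k_m); set K = k_1+⋯+k_m and let G_1,…,G_K be the rows of G. Let w ∈ (Z/2^m)^n \ C be a vector all of whose coordinates lie in {0, 2^{m−1}}. Define B_E = {G_t : ⟨G_t, w⟩ = 0} and B_O = {G_1,…,G_K} \ B_E, fix any G_i ∈ B_O, and set B_O′ = {G_i + G_j : G_j ∈ B_O}. Then B_O is nonempty, and the additive subgroup of (Z/2^m)^n generated by B_O′ ∪ B_E equals {v ∈ C : ⟨w,v⟩ = 0}. -/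
import Mathlib


open Finset

/-- Inner product of two vectors over `ZMod N`. -/
def innerZ {N n : ℕ} (x y : Fin n → ZMod N) : ZMod N := ∑ i, x i * y i

/-- Euclidean weight of a vector over `ZMod N`. -/
def euclWt {N n : ℕ} (x : Fin n → ZMod N) : ℕ :=
  ∑ i, min ((x i).val ^ 2) ((N - (x i).val) ^ 2)

/-- Number of coordinates of `x` equal to `a`. -/
def cntEq {N n : ℕ} (a : ZMod N) (x : Fin n → ZMod N) : ℕ :=
  (Finset.univ.filter fun j => x j = a).card

/-- A code is self-dual if it equals its dual. -/
def IsSelfDual {N n : ℕ} (C : AddSubgroup (Fin n → ZMod N)) : Prop :=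
  ∀ x, x ∈ C ↔ ∀ y ∈ C, innerZ x y = 0

/-- The subcode `{v ∈ C : ⟨w, v⟩ = 0}`. -/
def evenPart {N n : ℕ} (C : AddSubgroup (Fin n → ZMod N)) (w : Fin n → ZMod N) :
    AddSubgroup (Fin n → ZMod N) where
  carrier := {v | v ∈ C ∧ innerZ w v = 0}
  zero_mem' := ⟨C.zero_mem, by simp [innerZ]⟩
  add_mem' := by
    rintro a b ⟨ha, ha0⟩ ⟨hb, hb0⟩
    refine ⟨C.add_mem ha hb, ?_⟩
    have h : innerZ w (a + b) = innerZ w a + innerZ w b := by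
      simp [innerZ, mul_add, Finset.sum_add_distrib]
    rw [h, ha0, hb0, add_zero]
  neg_mem' := by
    rintro a ⟨ha, ha0⟩
    refine ⟨C.neg_mem ha, ?_⟩
    have h : innerZ w (-a) = - innerZ w a := by
      simp [innerZ]
    rw [h, ha0, neg_zero]

/-- `kv` extended to all of `ℕ` by zero. -/
def extk {m : ℕ} (kv : Fin m → ℕ) : ℕ → ℕ := fun t => if h : t < m then kv ⟨t, h⟩ else 0

/-- Partial sums `k_1 + ⋯ + k_j`. -/
def psum {m : ℕ} (kv : Fin m → ℕ) (j : ℕ) : ℕ := ∑ t ∈ Finset.range j, extk kv t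

/-- `G` is a generator matrix in standard form of type `(k_1, …, k_m)`. -/
def StandardForm {N : ℕ} {m n : ℕ} (kv : Fin m → ℕ)
    (G : Fin (psum kv m) → Fin n → ZMod N) : Prop :=
  psum kv m ≤ n ∧
  ∀ (j : Fin m) (r : Fin (psum kv m)), psum kv (j : ℕ) ≤ (r : ℕ) → (r : ℕ) < psum kv ((j : ℕ) + 1) →
    ∀ c : Fin n,
      (∀ l : Fin m, psum kv (l : ℕ) ≤ (c : ℕ) → (c : ℕ) < psum kv ((l : ℕ) + 1) →
        (l < j → G r c = 0) ∧
        (l = j → G r c = if (r : ℕ) = (c : ℕ) then (2 ^ (j : ℕ) : ZMod N) else 0)) ∧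
      ((psum kv m ≤ (c : ℕ) ∨
        ∃ l : Fin m, j < l ∧ psum kv (l : ℕ) ≤ (c : ℕ) ∧ (c : ℕ) < psum kv ((l : ℕ) + 1)) →
        ∃ a : ZMod N, G r c = 2 ^ (j : ℕ) * a)

/-- The minimum Euclidean weight over nonzero codewords equals `d`. -/
def minEuclWtIs {N n : ℕ} (C : AddSubgroup (Fin n → ZMod N)) (d : ℕ) : Prop :=
  (∀ x ∈ C, x ≠ 0 → d ≤ euclWt x) ∧ ∃ x ∈ C, x ≠ 0 ∧ euclWt x = d

/-- Coordinatewise reduction modulo 4. -/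
def res4 {n : ℕ} : (Fin n → ZMod 8) →+ (Fin n → ZMod 4) where
  toFun := fun x i => ZMod.castHom (by norm_num : (4 : ℕ) ∣ 8) (ZMod 4) (x i)
  map_zero' := by ext i; simp
  map_add' := by intro a b; ext i; exact map_add (ZMod.castHom (by norm_num) _) _ _

/-- Coordinatewise reduction modulo 2. -/
def res2 {n : ℕ} : (Fin n → ZMod 8) →+ (Fin n → ZMod 2) where
  toFun := fun x i => ZMod.castHom (by norm_num : (2 : ℕ) ∣ 8) (ZMod 2) (x i)
  map_zero' := by ext i; simp
  map_add' := by intro a b; ext i; exact map_add (ZMod.castHom (by norm_num) _) _ _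

/-- Hamming weight of a binary vector. -/
def hammingWt {n : ℕ} (y : Fin n → ZMod 2) : ℕ :=
  (Finset.univ.filter fun i => y i ≠ 0).card

/-- Equivalence of codes: a permutation of coordinates combined with sign changes. -/
def codeEquiv {N n : ℕ} (C C' : AddSubgroup (Fin n → ZMod N)) : Prop :=
  ∃ (σ : Equiv.Perm (Fin n)) (ε : Fin n → ZMod N),
    (∀ i, ε i = 1 ∨ ε i = -1) ∧
    ∀ y, y ∈ C' ↔ ∃ x ∈ C, y = fun i => ε i * x (σ i)


/-- `innerZ w ·` as an additive monoid hom. -/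
def innerHom {N n : ℕ} (w : Fin n → ZMod N) : (Fin n → ZMod N) →+ ZMod N where
  toFun v := innerZ w v
  map_zero' := by simp [innerZ]
  map_add' a b := by simp [innerZ, mul_add, Finset.sum_add_distrib]

theorem innerZ_comm {N n : ℕ} (x y : Fin n → ZMod N) : innerZ x y = innerZ y x := by
  simp [innerZ, mul_comm]

/-- `B_O` is nonempty and `B_O' ∪ B_E` generates
`{v ∈ C : ⟨w,v⟩ = 0}`. -/
theorem evenPart_generators {m n : ℕ} (hm : 2 ≤ m) (kv : Fin m → ℕ)
    (G : Fin (psum kv m) → Fin n → ZMod (2 ^ m)) (hSF : StandardForm kv G)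
    (C : AddSubgroup (Fin n → ZMod (2 ^ m)))
    (hgen : C = AddSubgroup.closure (Set.range G))
    (hsd : IsSelfDual C)
    (w : Fin n → ZMod (2 ^ m)) (hwC : w ∉ C)
    (hcoord : ∀ i, w i = 0 ∨ w i = (2 ^ (m - 1) : ZMod (2 ^ m))) :
    (∃ t : Fin (psum kv m), innerZ (G t) w ≠ 0) ∧
    ∀ i : Fin (psum kv m), innerZ (G i) w ≠ 0 →
      AddSubgroup.closure
        ({v | ∃ j : Fin (psum kv m), innerZ (G j) w ≠ 0 ∧ v = G i + G j} ∪
         {v | ∃ t : Fin (psum kv m), innerZ (G t) w = 0 ∧ v = G t}) =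
      evenPart C w := by
  haveI : NeZero (2 ^ m) := ⟨by positivity⟩
  have hm1 : m - 1 + 1 = m := by omega
  have hh : (2 : ZMod (2 ^ m)) ^ (m - 1) + 2 ^ (m - 1) = 0 := by
    have h := ZMod.natCast_self (2 ^ m)
    push_cast at h
    rw [← two_mul, ← pow_succ', hm1, h]
  have htor : ∀ k : ℕ, k • ((2 : ZMod (2 ^ m)) ^ (m - 1)) = 0 ∨
      k • ((2 : ZMod (2 ^ m)) ^ (m - 1)) = 2 ^ (m - 1) := by
    intro k
    induction k with
    | zero => left; simp
    | succ k ih =>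
      rw [succ_nsmul]
      rcases ih with h | h <;> rw [h]
      · right; rw [zero_add]
      · left; exact hh
  have hmul : ∀ a : ZMod (2 ^ m), a * 2 ^ (m - 1) = 0 ∨ a * 2 ^ (m - 1) = 2 ^ (m - 1) := by
    intro a
    obtain ⟨k, rfl⟩ := ZMod.natCast_zmod_surjective (n := 2 ^ m) a
    rw [← nsmul_eq_mul]
    exact htor k
  have hinner : ∀ v : Fin n → ZMod (2 ^ m),
      innerZ v w = 0 ∨ innerZ v w = 2 ^ (m - 1) := by
    intro v
    unfold innerZ
    apply Finset.sum_induction _ (fun x => x = 0 ∨ x = 2 ^ (m - 1))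
    · rintro a b (rfl | rfl) (rfl | rfl) <;> simp [hh]
    · left; rfl
    · intro i _
      rcases hcoord i with h0 | h0
      · left; rw [h0, mul_zero]
      · rw [h0]; exact hmul (v i)
  have GmemC : ∀ t, G t ∈ C := fun t => hgen ▸ AddSubgroup.subset_closure ⟨t, rfl⟩
  constructor
  · by_contra hno
    push_neg at hno
    apply hwC
    refine (hsd w).2 fun y hy => ?_
    have hCker : C ≤ (innerHom w).ker := by
      rw [hgen]
      refine (AddSubgroup.closure_le _).2 ?_
      rintro _ ⟨t, rfl⟩
      have : innerZ w (G t) = 0 := by rw [innerZ_comm]; exact hno t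
      exact this
    exact AddMonoidHom.mem_ker.mp (hCker hy)
  · intro i hi
    set S := ({v | ∃ j : Fin (psum kv m), innerZ (G j) w ≠ 0 ∧ v = G i + G j} ∪
         {v | ∃ t : Fin (psum kv m), innerZ (G t) w = 0 ∧ v = G t}) with hS
    have hle1 : AddSubgroup.closure S ≤ evenPart C w := by
      refine (AddSubgroup.closure_le _).2 ?_
      rintro v (⟨j, hj, rfl⟩ | ⟨t, ht, rfl⟩)
      · refine ⟨C.add_mem (GmemC i) (GmemC j), ?_⟩
        have hadd : innerZ w (G i + G j) = innerZ (G i) w + innerZ (G j) w := by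
          rw [innerZ_comm]
          simp [innerZ, add_mul, Finset.sum_add_distrib]
        rcases hinner (G i) with h | h
        · exact absurd h hi
        rcases hinner (G j) with h' | h'
        · exact absurd h' hj
        rw [hadd, h, h', hh]
      · refine ⟨GmemC t, ?_⟩
        rw [innerZ_comm]; exact ht
    refine le_antisymm hle1 ?_
    rintro v ⟨hvC, hv0⟩
    have hsup : v ∈ AddSubgroup.closure S ⊔ AddSubgroup.zmultiples (G i) := by
      have hle : C ≤ AddSubgroup.closure S ⊔ AddSubgroup.zmultiples (G i) := by
        rw [hgen]
        refine (AddSubgroup.closure_le _).2 ?_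
        rintro _ ⟨t, rfl⟩
        by_cases ht : innerZ (G t) w = 0
        · exact AddSubgroup.mem_sup_left (AddSubgroup.subset_closure (Or.inr ⟨t, ht, rfl⟩))
        · have h1 : G i + G t ∈ AddSubgroup.closure S :=
            AddSubgroup.subset_closure (Or.inl ⟨t, ht, rfl⟩)
          have h2 : G t = (G i + G t) + -(G i) := by abel
          rw [h2]
          exact AddSubgroup.add_mem _ (AddSubgroup.mem_sup_left h1)
            (AddSubgroup.mem_sup_right
              (AddSubgroup.neg_mem _ (AddSubgroup.mem_zmultiples _)))
      exact hle hvC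
    obtain ⟨x, hx, y, hy, rfl⟩ := AddSubgroup.mem_sup.mp hsup
    obtain ⟨c, rfl⟩ := AddSubgroup.mem_zmultiples_iff.mp hy
    have hx0 : innerZ w x = 0 := (hle1 hx).2
    have hGi : innerZ w (G i) = 2 ^ (m - 1) := by
      rw [innerZ_comm]
      rcases hinner (G i) with h | h
      · exact absurd h hi
      · exact h
    have hcz : c • ((2 : ZMod (2 ^ m)) ^ (m - 1)) = 0 := by
      have h1 : innerHom w (x + c • G i) = innerHom w x + c • innerHom w (G i) := by
        rw [map_add, map_zsmul]
      have h2 : innerHom w (x + c • G i) = 0 := hv0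
      have h3 : innerHom w x = 0 := hx0
      have h4 : innerHom w (G i) = 2 ^ (m - 1) := hGi
      rw [h2, h3, h4, zero_add] at h1
      exact h1.symm
    have hcast : ((c * 2 ^ (m - 1) : ℤ) : ZMod (2 ^ m)) = 0 := by
      push_cast
      rw [← zsmul_eq_mul]
      exact hcz
    have hdvd : ((2 ^ m : ℕ) : ℤ) ∣ c * 2 ^ (m - 1) :=
      (ZMod.intCast_zmod_eq_zero_iff_dvd _ _).mp hcast
    have h2c : (2 : ℤ) ∣ c := by
      push_cast at hdvd
      rw [mul_comm] at hdvd
      have hpow : ((2 : ℤ) ^ m) = 2 ^ (m - 1) * 2 := by rw [← pow_succ, hm1]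
      rw [hpow] at hdvd
      exact (mul_dvd_mul_iff_left (pow_ne_zero (m - 1) (two_ne_zero))).mp hdvd
    obtain ⟨d, rfl⟩ := h2c
    have hsm : (2 * d) • G i = d • (G i + G i) := by
      rw [mul_comm, mul_smul, two_zsmul]
    have hGii : G i + G i ∈ AddSubgroup.closure S :=
      AddSubgroup.subset_closure (Or.inl ⟨i, hi, rfl⟩)
    exact AddSubgroup.add_mem _ hx (hsm ▸ AddSubgroup.zsmul_mem _ hGii d)
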